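/- arXiv:2212.08837 — 3 statements merged into one kernel-verified Lean document; each statement's English description precedes it below -/
import Mathlib

section
/- Consider the linear recursion x(t+1) = A x(t) for t ∈ ℕ₀ \ {t_1, t_2, …} and x(t_k + 1) = A_J x(t_k) for k ≥ 1, where t_0 = -1 < t_1 < t_2 < ⋯ is a strictly increasing integer sequence satisfying t_{k+1} - t_k - 1 ≤ T_max for all k. Suppose there exist a symmetric matrix X with α I ⪯ X ⪯ β I for constants α, β > 0, and ρ ∈ (0,1), such that for every k ∈ [T_min, T_max] ∩ ℕ, the matrix (A_J A^k)ᵀ X (A_J A^k) - ρ X is negative semidefinite. If additionally t_{k+1} - t_k - 1 ∈ [T_min, T_max] for all k, then there exist M > 0 and ρ̂ ∈ (0,1) with ‖x(t)‖ ≤ M ρ̂^t ‖x(0)‖ for all t ∈ ℕ₀ and every initial condition x(0). One may take M = √(κβ/α) with κ = max_{0 ≤ j ≤ T_max} ‖A^j‖² and ρ̂ = ρ^{1/(2 T_max)}. -/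
open Matrix Finset
open scoped Matrix.Norms.L2Operator

/-- Lifting based exponential stability (stability part of Theorem 1).
Impulse instants `ts : ℕ → ℤ` with `ts 0 = -1`, strictly increasing, satisfying the
range dwell-time condition.  The trajectory follows `x(t+1) = A x(t)` at non-impulse
times and `x(tₖ+1) = A_J x(tₖ)` at impulse instants. -/
theorem lifting_based_exponential_stability {n : ℕ} (A AJ : Matrix (Fin n) (Fin n) ℝ)
    (Tmin Tmax : ℕ) (hT : 1 ≤ Tmin) (hTT : Tmin ≤ Tmax)
    (ts : ℕ → ℤ) (hmono : StrictMono ts) (h0 : ts 0 = -1)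
    (hADT : ∀ k : ℕ, ts (k + 1) - ts k - 1 ≤ (Tmax : ℤ))
    (X : Matrix (Fin n) (Fin n) ℝ) (hX : X.IsSymm)
    (α β : ℝ) (hα : 0 < α) (hβ : 0 < β)
    (hlow : (X - α • (1 : Matrix (Fin n) (Fin n) ℝ)).PosSemidef)
    (hup : ((β • (1 : Matrix (Fin n) (Fin n) ℝ)) - X).PosSemidef)
    (ρ : ℝ) (hρ : ρ ∈ Set.Ioo (0 : ℝ) 1)
    (hLMI : ∀ k : ℕ, Tmin ≤ k → k ≤ Tmax →
      (-((AJ * A ^ k)ᵀ * X * (AJ * A ^ k) - ρ • X)).PosSemidef)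
    (hRDT : ∀ k : ℕ, (Tmin : ℤ) ≤ ts (k + 1) - ts k - 1 ∧ ts (k + 1) - ts k - 1 ≤ (Tmax : ℤ))
    (x : ℕ → EuclideanSpace ℝ (Fin n))
    (hflow : ∀ t : ℕ, (¬ ∃ k ≥ 1, (t : ℤ) = ts k) → x (t + 1) = A *ᵥ x t)
    (hjump : ∀ t : ℕ, (∃ k ≥ 1, (t : ℤ) = ts k) → x (t + 1) = AJ *ᵥ x t) :
    ∃ M : ℝ, 0 < M ∧ ∃ ρhat : ℝ, ρhat ∈ Set.Ioo (0 : ℝ) 1 ∧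
      ∀ t : ℕ, ‖x t‖ ≤ M * ρhat ^ t * ‖x 0‖ := by
  obtain ⟨hρ0, hρ1⟩ := hρ
  -- dwell times and jump instants as naturals
  set τ : ℕ → ℕ := fun k => (ts (k + 1) - ts k - 1).toNat with hτdef
  have hτcast : ∀ k, (τ k : ℤ) = ts (k + 1) - ts k - 1 := by
    intro k
    have := (hRDT k).1
    simp only [hτdef]
    omega
  have hτmin : ∀ k, Tmin ≤ τ k := by
    intro k; have h1 := (hRDT k).1; have h2 := hτcast k; omega
  have hτmax : ∀ k, τ k ≤ Tmax := by
    intro k; have h1 := (hRDT k).2; have h2 := hτcast k; omega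
  have hts : ∀ k, 0 ≤ ts k + 1 := by
    intro k
    induction k with
    | zero => omega
    | succ k ih => have := (hRDT k).1; omega
  set s : ℕ → ℕ := fun k => (ts k + 1).toNat with hsdef
  have hscast : ∀ k, (s k : ℤ) = ts k + 1 := by
    intro k; simp only [hsdef]; have := hts k; omega
  have hs0 : s 0 = 0 := by have := hscast 0; omega
  have hssucc : ∀ k, s (k + 1) = s k + τ k + 1 := by
    intro k
    have h1 := hscast k; have h2 := hscast (k + 1); have h3 := hτcast k
    omega
  have hk_le_s : ∀ k, k ≤ s k := by
    intro k
    induction k with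
    | zero => omega
    | succ k ih => have := hssucc k; omega
  have hsle : ∀ k, s k ≤ k * (Tmax + 1) := by
    intro k
    induction k with
    | zero => omega
    | succ k ih =>
      have h1 := hssucc k
      have h2 := hτmax k
      have h3 : (k + 1) * (Tmax + 1) = k * (Tmax + 1) + (Tmax + 1) := Nat.succ_mul _ _
      omega
  -- flow segments
  have hseg : ∀ k j, j ≤ τ k → x (s k + j) = (A ^ j) *ᵥ x (s k) := by
    intro k j
    induction j with
    | zero => intro _; simp
    | succ j ih =>
      intro hj
      have hx := ih (Nat.le_of_succ_le hj)
      have hnot : ¬ ∃ m ≥ 1, ((s k + j : ℕ) : ℤ) = ts m := by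
        rintro ⟨m, hm1, hm⟩
        have e1 := hscast k
        have e2 := hτcast k
        push_cast at hm
        have hlt1 : ts k < ts m := by omega
        have hlt2 : ts m < ts (k + 1) := by omega
        have q1 := hmono.lt_iff_lt.mp hlt1
        have q2 := hmono.lt_iff_lt.mp hlt2
        omega
      have hfl := hflow (s k + j) hnot
      show (x (s k + j + 1)).ofLp = _
      rw [hfl, hx, mulVec_mulVec, ← pow_succ']
  -- jumps
  have hjmp : ∀ k, x (s (k + 1)) = (AJ * A ^ (τ k)) *ᵥ x (s k) := by
    intro k
    have hex : ∃ m ≥ 1, ((s k + τ k : ℕ) : ℤ) = ts m := by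
      refine ⟨k + 1, by omega, ?_⟩
      have e1 := hscast k
      have e2 := hτcast k
      push_cast
      omega
    have hj := hjump _ hex
    rw [hssucc k, hj, hseg k (τ k) le_rfl, mulVec_mulVec]
  -- quadratic-form machinery
  have hnormsq : ∀ v : EuclideanSpace ℝ (Fin n), (v : Fin n → ℝ) ⬝ᵥ v = ‖v‖ ^ 2 := by
    intro v
    rw [← real_inner_self_eq_norm_sq]
    rw [EuclideanSpace.inner_eq_star_dotProduct]; simp [dotProduct_comm]
  have hVlow : ∀ v : EuclideanSpace ℝ (Fin n),
      α * ‖v‖ ^ 2 ≤ (v : Fin n → ℝ) ⬝ᵥ (X *ᵥ v) := by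
    intro v
    have h := hlow.dotProduct_mulVec_nonneg v
    simp only [star_trivial] at h
    rw [sub_mulVec, dotProduct_sub, smul_mulVec, one_mulVec, dotProduct_smul,
      smul_eq_mul, hnormsq v] at h
    linarith
  have hVup : ∀ v : EuclideanSpace ℝ (Fin n),
      (v : Fin n → ℝ) ⬝ᵥ (X *ᵥ v) ≤ β * ‖v‖ ^ 2 := by
    intro v
    have h := hup.dotProduct_mulVec_nonneg v
    simp only [star_trivial] at h
    rw [sub_mulVec, dotProduct_sub, smul_mulVec, one_mulVec, dotProduct_smul,
      smul_eq_mul, hnormsq v] at h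
    linarith
  have hVdec : ∀ m, Tmin ≤ m → m ≤ Tmax → ∀ v : Fin n → ℝ,
      ((AJ * A ^ m) *ᵥ v) ⬝ᵥ (X *ᵥ ((AJ * A ^ m) *ᵥ v)) ≤ ρ * (v ⬝ᵥ (X *ᵥ v)) := by
    intro m h1 h2 v
    have h := (hLMI m h1 h2).dotProduct_mulVec_nonneg v
    simp only [star_trivial] at h
    rw [neg_mulVec, dotProduct_neg, sub_mulVec, dotProduct_sub, smul_mulVec,
      dotProduct_smul, smul_eq_mul] at h
    have hq : v ⬝ᵥ (((AJ * A ^ m)ᵀ * X * (AJ * A ^ m)) *ᵥ v)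
        = ((AJ * A ^ m) *ᵥ v) ⬝ᵥ (X *ᵥ ((AJ * A ^ m) *ᵥ v)) := by
      rw [← mulVec_mulVec, ← mulVec_mulVec, dotProduct_mulVec v, vecMul_transpose]
    linarith
  -- Lyapunov decay along the lifted sequence
  have hVy : ∀ k, ((x (s k) : Fin n → ℝ) ⬝ᵥ (X *ᵥ x (s k)))
      ≤ ρ ^ k * ((x 0 : Fin n → ℝ) ⬝ᵥ (X *ᵥ x 0)) := by
    intro k
    induction k with
    | zero => rw [hs0]; simp
    | succ k ih =>
      have hd := hVdec (τ k) (hτmin k) (hτmax k) (x (s k))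
      rw [hjmp k]
      calc ((AJ * A ^ τ k) *ᵥ x (s k)) ⬝ᵥ (X *ᵥ ((AJ * A ^ τ k) *ᵥ x (s k)))
          ≤ ρ * ((x (s k) : Fin n → ℝ) ⬝ᵥ (X *ᵥ x (s k))) := hd
        _ ≤ ρ * (ρ ^ k * ((x 0 : Fin n → ℝ) ⬝ᵥ (X *ᵥ x 0))) :=
            mul_le_mul_of_nonneg_left ih hρ0.le
        _ = ρ ^ (k + 1) * ((x 0 : Fin n → ℝ) ⬝ᵥ (X *ᵥ x 0)) := by ring
  have hynorm : ∀ k, ‖x (s k)‖ ^ 2 ≤ β / α * ρ ^ k * ‖x 0‖ ^ 2 := by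
    intro k
    have h1 := hVy k
    have h2 := hVlow (x (s k))
    have h3 := hVup (x 0)
    have h4 : (0:ℝ) ≤ ρ ^ k := pow_nonneg hρ0.le k
    rw [div_mul_eq_mul_div, div_mul_eq_mul_div, le_div_iff₀ hα]
    nlinarith [mul_le_mul_of_nonneg_left h3 h4]
  -- operator norm bound on flow segments
  set C : ℝ := max 1 ‖A‖ with hCdef
  have hC1 : (1:ℝ) ≤ C := le_max_left _ _
  have hC0 : (0:ℝ) < C := lt_of_lt_of_le one_pos hC1
  have hApow : ∀ (j : ℕ) (v w : EuclideanSpace ℝ (Fin n)),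
      w = (A ^ j) *ᵥ v → ‖w‖ ≤ C ^ j * ‖v‖ := by
    intro j
    induction j with
    | zero => intro v w hw; rw [pow_zero, one_mulVec] at hw; rw [WithLp.ofLp_injective 2 hw]; simp
    | succ j ih =>
      intro v w hw
      set u : EuclideanSpace ℝ (Fin n) := WithLp.toLp 2 ((A ^ j) *ᵥ v) with hu
      have h2 : ‖u‖ ≤ C ^ j * ‖v‖ := ih v u rfl
      have hw' : w = A *ᵥ u := by rw [hw, pow_succ', ← mulVec_mulVec]
      have h1 : ‖w‖ ≤ ‖A‖ * ‖u‖ := by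
        rw [WithLp.ofLp_injective 2 (hw'.trans rfl : w.ofLp = ((EuclideanSpace.equiv (Fin n) ℝ).symm (A *ᵥ u)).ofLp)]; exact A.l2_opNorm_mulVec u
      calc ‖w‖ ≤ ‖A‖ * ‖u‖ := h1
        _ ≤ C * (C ^ j * ‖v‖) := mul_le_mul (le_max_right _ _) h2 (norm_nonneg u) hC0.le
        _ = C ^ (j + 1) * ‖v‖ := by ring
  -- constants
  set σ : ℝ := Real.sqrt ρ with hσdef
  have hσ0 : (0:ℝ) < σ := Real.sqrt_pos.mpr hρ0
  have hσsq : σ ^ 2 = ρ := Real.sq_sqrt hρ0.le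
  set D : ℝ := Real.sqrt (β / α) with hDdef
  have hD0 : (0:ℝ) < D := Real.sqrt_pos.mpr (by positivity)
  have hDsq : D ^ 2 = β / α := Real.sq_sqrt (by positivity)
  refine ⟨C ^ Tmax * D / σ, by positivity, ρ ^ ((1:ℝ) / (2 * ((Tmax:ℝ) + 1))),
    ⟨Real.rpow_pos_of_pos hρ0 _, Real.rpow_lt_one hρ0.le hρ1 (by positivity)⟩, ?_⟩
  intro t
  set ρhat : ℝ := ρ ^ ((1:ℝ) / (2 * ((Tmax:ℝ) + 1))) with hρhdef
  -- locate t in a segment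
  have hP0 : s 0 ≤ t := by omega
  set k := Nat.findGreatest (fun m => s m ≤ t) t with hkdef
  have hk1 : s k ≤ t := Nat.findGreatest_spec (P := fun m => s m ≤ t) (Nat.zero_le t) hP0
  have hk2 : t < s (k + 1) := by
    by_contra hcon
    push_neg at hcon
    have h5 : k + 1 ≤ t := le_trans (hk_le_s (k + 1)) hcon
    have := Nat.le_findGreatest (P := fun m => s m ≤ t) h5 hcon
    omega
  set j := t - s k with hjdef
  have hjτ : j ≤ τ k := by have := hssucc k; omega
  have hts' : t = s k + j := by omega
  have hxt : x t = (A ^ j) *ᵥ x (s k) := by rw [hts']; exact hseg k j hjτ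
  have hb1 : ‖x t‖ ≤ C ^ j * ‖x (s k)‖ := hApow j (x (s k)) (x t) hxt
  have hb2 : C ^ j ≤ C ^ Tmax := pow_le_pow_right₀ hC1 (le_trans hjτ (hτmax k))
  have hy : ‖x (s k)‖ ≤ D * σ ^ k * ‖x 0‖ := by
    have h2 : (D * σ ^ k * ‖x 0‖) ^ 2 = β / α * ρ ^ k * ‖x 0‖ ^ 2 := by
      calc (D * σ ^ k * ‖x 0‖) ^ 2 = D ^ 2 * (σ ^ 2) ^ k * ‖x 0‖ ^ 2 := by ring
        _ = β / α * ρ ^ k * ‖x 0‖ ^ 2 := by rw [hσsq, hDsq]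
    calc ‖x (s k)‖ = Real.sqrt (‖x (s k)‖ ^ 2) := (Real.sqrt_sq (norm_nonneg _)).symm
      _ ≤ Real.sqrt ((D * σ ^ k * ‖x 0‖) ^ 2) :=
          Real.sqrt_le_sqrt (by rw [h2]; exact hynorm k)
      _ = D * σ ^ k * ‖x 0‖ := Real.sqrt_sq (by positivity)
  have httop : t + 1 ≤ (k + 1) * (Tmax + 1) := le_trans (by omega) (hsle (k + 1))
  have hexp : σ ^ (k + 1) ≤ ρhat ^ t := by
    have e1 : σ ^ (k + 1) = ρ ^ ((((k:ℝ) + 1)) / 2) := by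
      rw [hσdef, Real.sqrt_eq_rpow, ← Real.rpow_natCast (ρ ^ ((1:ℝ)/2)) (k + 1),
        ← Real.rpow_mul hρ0.le]
      congr 1
      push_cast
      ring
    have e2 : ρhat ^ t = ρ ^ ((t:ℝ) / (2 * ((Tmax:ℝ) + 1))) := by
      rw [hρhdef, ← Real.rpow_natCast (ρ ^ ((1:ℝ) / (2 * ((Tmax:ℝ) + 1)))) t,
        ← Real.rpow_mul hρ0.le]
      congr 1
      ring
    rw [e1, e2]
    apply Real.rpow_le_rpow_of_exponent_ge hρ0 hρ1.le
    rw [div_le_div_iff₀ (by positivity) (by positivity)]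
    have hcast : (t:ℝ) + 1 ≤ ((k:ℝ) + 1) * ((Tmax:ℝ) + 1) := by exact_mod_cast httop
    nlinarith
  have key : ‖x t‖ * σ ≤ (C ^ Tmax * D * ρhat ^ t) * ‖x 0‖ := by
    calc ‖x t‖ * σ ≤ (C ^ j * ‖x (s k)‖) * σ := mul_le_mul_of_nonneg_right hb1 hσ0.le
      _ ≤ (C ^ Tmax * (D * σ ^ k * ‖x 0‖)) * σ :=
          mul_le_mul_of_nonneg_right
            (mul_le_mul hb2 hy (norm_nonneg _) (by positivity)) hσ0.le
      _ = (C ^ Tmax * D * ‖x 0‖) * σ ^ (k + 1) := by ring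
      _ ≤ (C ^ Tmax * D * ‖x 0‖) * ρhat ^ t :=
          mul_le_mul_of_nonneg_left hexp (by positivity)
      _ = (C ^ Tmax * D * ρhat ^ t) * ‖x 0‖ := by ring
  have hMeq : C ^ Tmax * D / σ * ρhat ^ t * ‖x 0‖
      = ((C ^ Tmax * D * ρhat ^ t) * ‖x 0‖) / σ := by
    field_simp
  rw [hMeq, le_div_iff₀ hσ0]
  exact key
end

section
/- (Elimination lemma, non-strict-free version.) Let P ∈ 𝕊^l, W ∈ ℝ^{l×k}, U ∈ ℝ^{l×m}, V ∈ ℝ^{n×k}, and let V_⊥ be a basis matrix of ker(V). Then there exists K ∈ ℝ^{m×n} with (W + U K V)ᵀ P (W + U K V) ≺ 0 if and only if (W V_⊥)ᵀ P (W V_⊥) ≺ 0 and the symmetric matrix [W, U]ᵀ P [W, U] has at least k negative eigenvalues. -/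
/-!
Let `S` be the form `(x, y) ↦ (W x + U y)ᵀ P (W x + U y)` on `ℝ^k × ℝ^m`, i.e. `[W, U]ᵀ P [W, U]`.
A gain `K` works exactly when the graph of `x ↦ K V x` is an `S`-negative subspace; it has
dimension `k` and contains `ker V × 0`, which gives necessity. Conversely, `ker V × 0` is negative
and meets `0 × ℝ^m` trivially. Since some negative subspace has dimension `k`, it can be enlarged,
one `S`-orthogonal vector at a time, to a `k`-dimensional negative subspace still transverse to
`0 × ℝ^m`. That subspace is the graph of a linear map vanishing on `ker V`, and such a map
factors through `V`.
-/

open Matrix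

/-- A symmetric matrix `S` (indexed by `ι`) has at least `k` negative eigenvalues:
there is a subspace of dimension at least `k` on which the quadratic form is
negative definite. -/
def HasAtLeastNegEigenvalues {ι : Type*} [Fintype ι] (S : Matrix ι ι ℝ) (k : ℕ) : Prop :=
  ∃ W : Submodule ℝ (ι → ℝ), k ≤ Module.finrank ℝ W ∧
    ∀ v ∈ W, v ≠ 0 → v ⬝ᵥ S *ᵥ v < 0

open Module LinearMap Filter Topology

theorem LinearMap.exists_comp_eq_of_ker_le {K X Y Z : Type*} [Field K] [AddCommGroup X]
    [Module K X] [AddCommGroup Y] [Module K Y] [AddCommGroup Z] [Module K Z]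
    {v : X →ₗ[K] Z} {L : X →ₗ[K] Y} (h : ker v ≤ ker L) : ∃ κ : Z →ₗ[K] Y, κ ∘ₗ v = L := by
  obtain ⟨κ, hκ⟩ := exists_extend ((ker v).liftQ L h ∘ₗ v.quotKerEquivRange.symm.toLinearMap)
  refine ⟨κ, LinearMap.ext fun x ↦ ?_⟩
  simpa using congr($hκ ⟨v x, mem_range_self v x⟩)

namespace LinearMap.BilinForm

variable {V : Type*} [AddCommGroup V] [Module ℝ V] (B : LinearMap.BilinForm ℝ V)

def IsNegDefOn (M : Submodule ℝ V) : Prop := ∀ v ∈ M, v ≠ 0 → B v v < 0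

variable {B}

theorem IsNegDefOn.mono {M M' : Submodule ℝ V} (h : B.IsNegDefOn M) (hM' : M' ≤ M) :
    B.IsNegDefOn M' :=
  fun v hv ↦ h v (hM' hv)

theorem IsNegDefOn.disjoint_orthogonal {M : Submodule ℝ V} (hM : B.IsNegDefOn M) :
    Disjoint M (B.orthogonal M) := by
  refine Submodule.disjoint_def.2 fun v hvM hvO ↦ ?_
  by_contra hv
  exact (hM v hvM hv).ne (hvO v hvM)

theorem IsNegDefOn.sup_span_singleton (hB : B.IsSymm) {M : Submodule ℝ V} (hM : B.IsNegDefOn M)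
    {w : V} (hw : B w w < 0) (hwM : w ∈ B.orthogonal M) : B.IsNegDefOn (M ⊔ ℝ ∙ w) := by
  intro v hv hv0
  obtain ⟨x, hx, y, hy, rfl⟩ := Submodule.mem_sup.1 hv
  obtain ⟨c, rfl⟩ := Submodule.mem_span_singleton.1 hy
  have hxw : B x w = 0 := hwM x hx
  have hwx : B w x = 0 := by rw [hB.eq, hxw]
  have hexpand : B (x + c • w) (x + c • w) = B x x + c ^ 2 * B w w := by
    simp only [map_add, map_smul, LinearMap.add_apply, LinearMap.smul_apply, hxw, hwx,
      smul_eq_mul]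
    ring
  rw [hexpand]
  rcases eq_or_ne c 0 with rfl | hc
  · simpa using hM x hx (by simpa using hv0)
  · have hxx : B x x ≤ 0 := by
      rcases eq_or_ne x 0 with rfl | hx0
      · simp
      · exact (hM x hx hx0).le
    linarith [mul_neg_of_pos_of_neg (by positivity : 0 < c ^ 2) hw]

/-- The negative cone of a subspace `O` is open in `O`, so it cannot lie in a subspace
`T` that does not contain `O`. -/
theorem exists_mem_notMem_apply_neg {O T : Submodule ℝ V} (hOT : ¬O ≤ T) {w₀ : V}
    (hw₀O : w₀ ∈ O) (hw₀ : B w₀ w₀ < 0) : ∃ w ∈ O, w ∉ T ∧ B w w < 0 := by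
  rcases em' (w₀ ∈ T) with hw₀T | hw₀T
  · exact ⟨w₀, hw₀O, hw₀T, hw₀⟩
  obtain ⟨u, huO, huT⟩ := SetLike.not_le_iff_exists.1 hOT
  have hcont : Continuous fun ε : ℝ ↦ B (w₀ + ε • u) (w₀ + ε • u) := by
    simp only [map_add, map_smul, LinearMap.add_apply, LinearMap.smul_apply, smul_eq_mul]
    fun_prop
  have hnear : ∀ᶠ ε in 𝓝[≠] (0 : ℝ), B (w₀ + ε • u) (w₀ + ε • u) < 0 :=
    nhdsWithin_le_nhds (hcont.continuousAt.eventually_lt continuousAt_const (by simpa using hw₀))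
  obtain ⟨ε, hε, hε0⟩ := (hnear.and self_mem_nhdsWithin).exists
  refine ⟨w₀ + ε • u, O.add_mem hw₀O (O.smul_mem ε huO), fun h ↦ huT ?_, hε⟩
  have : ε • u ∈ T := by simpa using T.sub_mem h hw₀T
  exact (T.smul_mem_iff hε0).1 this

variable [FiniteDimensional ℝ V]

/-- The new direction is taken `B`-orthogonal to `M`, where `N` still has a negative vector
(dimension count), and then moved off `M ⊔ E`. -/
theorem IsNegDefOn.exists_lt (hB : B.IsSymm) {M N E : Submodule ℝ V} (hM : B.IsNegDefOn M)
    (hN : B.IsNegDefOn N) (hME : Disjoint M E) (hMN : finrank ℝ M < finrank ℝ N)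
    (hME_dim : finrank ℝ M + finrank ℝ E < finrank ℝ V) :
    ∃ M', M < M' ∧ B.IsNegDefOn M' ∧ Disjoint M' E := by
  set O := B.orthogonal M
  have hMO : IsCompl M O := (isCompl_orthogonal_iff_disjoint hB.isRefl).2 hM.disjoint_orthogonal
  have hMO_dim := Submodule.finrank_add_eq_of_isCompl hMO
  obtain ⟨w₀, ⟨hw₀N, hw₀O⟩, hw₀⟩ : ∃ w₀ ∈ N ⊓ O, w₀ ≠ 0 := by
    refine Submodule.exists_mem_ne_zero_of_ne_bot fun h ↦ ?_
    have hsum := Submodule.finrank_sup_add_finrank_inf_eq N O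
    rw [h, finrank_bot] at hsum
    have := (N ⊔ O).finrank_le
    omega
  have hOME : ¬O ≤ M ⊔ E := fun h ↦ by
    have htop : M ⊔ E = ⊤ := top_unique (hMO.codisjoint.eq_top ▸ sup_le le_sup_left h)
    have := Submodule.finrank_add_le_finrank_add_finrank M E
    rw [htop, finrank_top] at this
    omega
  obtain ⟨w, hwO, hwME, hw⟩ := exists_mem_notMem_apply_neg hOME hw₀O (hN w₀ hw₀N hw₀)
  have hw0 : w ≠ 0 := by rintro rfl; simp at hw
  refine ⟨M ⊔ ℝ ∙ w, left_lt_sup.2 fun h ↦ hwME ?_, hM.sup_span_singleton hB hw hwO, ?_⟩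
  · exact Submodule.mem_sup_left ((Submodule.span_singleton_le_iff_mem w M).1 h)
  · rw [sup_comm]
    exact hME.disjoint_sup_left_of_disjoint_sup_right
      ((Submodule.disjoint_span_singleton' hw0).2 hwME).symm

theorem IsNegDefOn.exists_le_le_finrank (hB : B.IsSymm) {M N E : Submodule ℝ V} {k : ℕ}
    (hM : B.IsNegDefOn M) (hN : B.IsNegDefOn N) (hME : Disjoint M E) (hkN : k ≤ finrank ℝ N)
    (hkE : finrank ℝ E + k ≤ finrank ℝ V) :
    ∃ M', M ≤ M' ∧ B.IsNegDefOn M' ∧ Disjoint M' E ∧ k ≤ finrank ℝ M' := by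
  by_cases hkM : k ≤ finrank ℝ M
  · exact ⟨M, le_rfl, hM, hME, hkM⟩
  obtain ⟨M₁, hMM₁, hM₁, hM₁E⟩ := hM.exists_lt hB hN hME (by omega) (by omega)
  obtain ⟨M', hM₁M', hM', hM'E, hkM'⟩ := hM₁.exists_le_le_finrank hB hN hM₁E hkN hkE
  exact ⟨M', hMM₁.le.trans hM₁M', hM', hM'E, hkM'⟩
termination_by k - finrank ℝ M
decreasing_by have := Submodule.finrank_lt_finrank_of_lt hMM₁; omega

section Graph

variable {X Y Z : Type*} [AddCommGroup X] [Module ℝ X] [AddCommGroup Y] [Module ℝ Y]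
  [AddCommGroup Z] [Module ℝ Z] {B : LinearMap.BilinForm ℝ (X × Y)}

theorem isNegDefOn_graph_iff (L : X →ₗ[ℝ] Y) :
    B.IsNegDefOn L.graph ↔ ∀ x, x ≠ 0 → B (x, L x) (x, L x) < 0 := by
  refine ⟨fun h x hx ↦ h _ ((mem_graph_iff _ _).2 rfl) (by simp [hx]), ?_⟩
  rintro h ⟨x, y⟩ hxy hne
  obtain rfl : y = L x := (mem_graph_iff _ _).1 hxy
  exact h x fun hx ↦ hne (by simp [hx])

theorem isNegDefOn_prod_bot_iff (S : Submodule ℝ X) :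
    B.IsNegDefOn (S.prod ⊥) ↔ ∀ x ∈ S, x ≠ 0 → B (x, 0) (x, 0) < 0 := by
  refine ⟨fun h x hx hx0 ↦ h _ ⟨hx, rfl⟩ (by simp [hx0]), ?_⟩
  rintro h ⟨x, y⟩ ⟨hx, hy⟩ hne
  obtain rfl : y = 0 := hy
  exact h x hx fun hx0 ↦ hne (by simp [hx0])

variable [FiniteDimensional ℝ X] [FiniteDimensional ℝ Y]

/-- Enlarge `S × 0` to a negative subspace of dimension `dim X` avoiding `0 × Y`;
such a subspace projects isomorphically onto `X`, so it is a graph. -/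
theorem exists_ker_le_isNegDefOn_graph (hB : B.IsSymm) {S : Submodule ℝ X}
    (hS : B.IsNegDefOn (S.prod ⊥)) {N : Submodule ℝ (X × Y)} (hN : B.IsNegDefOn N)
    (hXN : finrank ℝ X ≤ finrank ℝ N) :
    ∃ L : X →ₗ[ℝ] Y, S ≤ ker L ∧ B.IsNegDefOn L.graph := by
  set E := range (inr ℝ X Y)
  have hE : finrank ℝ E = finrank ℝ Y := finrank_range_of_inj inr_injective
  have hSE : Disjoint (S.prod ⊥) E := by
    refine Submodule.disjoint_def.2 ?_
    rintro _ ⟨-, hy⟩ ⟨y, rfl⟩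
    obtain rfl : y = 0 := hy
    rfl
  obtain ⟨M, hSM, hM, hME, hXM⟩ :=
    hS.exists_le_le_finrank hB hN hSE hXN (by rw [hE, finrank_prod, add_comm])
  have hinj : Function.Injective (fst ℝ X Y ∘ₗ M.subtype) := by
    refine (injective_iff_map_eq_zero _).2 fun p hp ↦ Subtype.ext ?_
    refine Submodule.disjoint_def.1 hME p p.2 ⟨p.1.2, Prod.ext ?_ rfl⟩
    simpa using hp.symm
  have hdim : finrank ℝ M = finrank ℝ X := (finrank_le_finrank_of_injective hinj).antisymm hXM
  obtain ⟨L, rfl⟩ := Submodule.exists_eq_graph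
    ⟨hinj, (injective_iff_surjective_of_finrank_eq_finrank hdim).1 hinj⟩
  refine ⟨L, fun x hx ↦ ?_, hM⟩
  exact ((mem_graph_iff _ _).1 (hSM ⟨hx, rfl⟩ : (x, 0) ∈ L.graph)).symm

theorem exists_isNegDefOn_graph_comp_iff (hB : B.IsSymm) (v : X →ₗ[ℝ] Z) :
    (∃ κ : Z →ₗ[ℝ] Y, B.IsNegDefOn (κ ∘ₗ v).graph) ↔
      B.IsNegDefOn ((ker v).prod ⊥) ∧
        ∃ N : Submodule ℝ (X × Y), finrank ℝ X ≤ finrank ℝ N ∧ B.IsNegDefOn N := by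
  constructor
  · rintro ⟨κ, hκ⟩
    refine ⟨hκ.mono fun p ⟨hp₁, hp₂⟩ ↦ ?_, (κ ∘ₗ v).graph, ?_, hκ⟩
    · rw [mem_graph_iff, (Submodule.mem_bot ℝ).1 hp₂, LinearMap.comp_apply, mem_ker.1 hp₁, map_zero]
    · rw [graph_eq_range_prod, finrank_range_of_inj fun x y h ↦ congr_arg Prod.fst h]
  · rintro ⟨hker, N, hN, hXN⟩
    obtain ⟨L, hL, hgraph⟩ := exists_ker_le_isNegDefOn_graph hB hker hXN hN
    obtain ⟨κ, rfl⟩ := exists_comp_eq_of_ker_le hL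
    exact ⟨κ, hgraph⟩

end Graph

end LinearMap.BilinForm

open LinearMap.BilinForm

section MatrixForms

variable {ι κ : Type*} [Fintype ι] [Fintype κ]

theorem Matrix.dotProduct_transpose_mul_mul_mulVec (P : Matrix κ κ ℝ) (A : Matrix κ ι ℝ)
    (x : ι → ℝ) : x ⬝ᵥ (Aᵀ * P * A) *ᵥ x = (A *ᵥ x) ⬝ᵥ P *ᵥ (A *ᵥ x) := by
  rw [← mulVec_mulVec, ← mulVec_mulVec, dotProduct_mulVec, vecMul_transpose]

theorem Matrix.posDef_neg_transpose_mul_mul_iff {P : Matrix κ κ ℝ} (hP : P.IsSymm)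
    (A : Matrix κ ι ℝ) :
    (-(Aᵀ * P * A)).PosDef ↔ ∀ x, x ≠ 0 → (A *ᵥ x) ⬝ᵥ P *ᵥ (A *ᵥ x) < 0 := by
  have hherm : (-(Aᵀ * P * A)).IsHermitian := by
    simpa [conjTranspose_eq_transpose_of_trivial] using
      (isHermitian_conjTranspose_mul_mul A (isHermitian_iff_isSymm.2 hP)).neg
  rw [posDef_iff_dotProduct_mulVec, and_iff_right hherm]
  refine forall_congr' fun x ↦ imp_congr_right fun _ ↦ ?_
  rw [star_trivial, neg_mulVec, dotProduct_neg, dotProduct_transpose_mul_mul_mulVec, neg_pos]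

variable {ι' ν : Type*} [Fintype ι']

/-- The bilinear form of `[W, U]ᵀ P [W, U]`, moved from `ℝ^(ι ⊕ ι')` to `ℝ^ι × ℝ^ι'`. -/
noncomputable def Matrix.blockForm [DecidableEq κ] (P : Matrix κ κ ℝ) (W : Matrix κ ι ℝ)
    (U : Matrix κ ι' ℝ) :
    LinearMap.BilinForm ℝ ((ι → ℝ) × (ι' → ℝ)) :=
  P.toBilin'.compl₁₂ (W.mulVecLin.coprod U.mulVecLin) (W.mulVecLin.coprod U.mulVecLin)

variable [DecidableEq κ] {P : Matrix κ κ ℝ} {W : Matrix κ ι ℝ} {U : Matrix κ ι' ℝ}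

theorem Matrix.blockForm_apply (p q : (ι → ℝ) × (ι' → ℝ)) :
    blockForm P W U p q = (W *ᵥ p.1 + U *ᵥ p.2) ⬝ᵥ P *ᵥ (W *ᵥ q.1 + U *ᵥ q.2) := by
  simp [blockForm, toBilin'_apply']

theorem Matrix.IsSymm.isSymm_blockForm (hP : P.IsSymm) (W : Matrix κ ι ℝ) (U : Matrix κ ι' ℝ) :
    (blockForm P W U).IsSymm :=
  ⟨fun p q ↦ by
    rw [blockForm_apply, blockForm_apply, dotProduct_mulVec, ← mulVec_transpose, hP.eq,
      dotProduct_comm]⟩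

theorem Matrix.posDef_neg_add_mul_mul_iff [Fintype ν] (hP : P.IsSymm) (K : Matrix ι' ν ℝ)
    (V : Matrix ν ι ℝ) :
    (-((W + U * K * V)ᵀ * P * (W + U * K * V))).PosDef ↔
      (blockForm P W U).IsNegDefOn (K.mulVecLin ∘ₗ V.mulVecLin).graph := by
  rw [posDef_neg_transpose_mul_mul_iff hP, isNegDefOn_graph_iff]
  simp [blockForm_apply, add_mulVec, ← mulVec_mulVec]

theorem Matrix.posDef_neg_mul_iff_isNegDefOn_prod_bot (hP : P.IsSymm) {r : Type*} [Fintype r]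
    {V : Matrix ν ι ℝ} {Vperp : Matrix ι r ℝ}
    (hbasis : range Vperp.mulVecLin = ker V.mulVecLin) (hinj : Function.Injective Vperp.mulVecLin) :
    (-((W * Vperp)ᵀ * P * (W * Vperp))).PosDef ↔
      (blockForm P W U).IsNegDefOn ((ker V.mulVecLin).prod ⊥) := by
  rw [posDef_neg_transpose_mul_mul_iff hP, isNegDefOn_prod_bot_iff, ← hbasis]
  have hVperp (c : r → ℝ) : Vperp *ᵥ c = 0 ↔ c = 0 := map_eq_zero_iff _ hinj
  simp [blockForm_apply, ← mulVec_mulVec, hVperp]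

theorem hasAtLeastNegEigenvalues_fromCols_iff (d : ℕ) :
    HasAtLeastNegEigenvalues ((fromCols W U)ᵀ * P * fromCols W U) d ↔
      ∃ N : Submodule ℝ ((ι → ℝ) × (ι' → ℝ)), d ≤ finrank ℝ N ∧ (blockForm P W U).IsNegDefOn N := by
  let e := LinearEquiv.sumArrowLequivProdArrow ι ι' ℝ ℝ
  have he (v : ι ⊕ ι' → ℝ) :
      v ⬝ᵥ ((fromCols W U)ᵀ * P * fromCols W U) *ᵥ v = blockForm P W U (e v) (e v) := by
    rw [dotProduct_transpose_mul_mul_mulVec, blockForm_apply, fromCols_mulVec]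
    rfl
  constructor
  · rintro ⟨N, hdN, hN⟩
    refine ⟨N.map e.toLinearMap, by rwa [e.finrank_map_eq], fun p hp hp0 ↦ ?_⟩
    rw [Submodule.mem_map_equiv] at hp
    have := hN _ hp (by simpa using hp0)
    rwa [he, e.apply_symm_apply] at this
  · rintro ⟨N, hdN, hN⟩
    refine ⟨N.map e.symm.toLinearMap, by rwa [e.symm.finrank_map_eq], fun v hv hv0 ↦ ?_⟩
    rw [Submodule.mem_map_equiv, e.symm_symm] at hv
    rw [he]
    exact hN _ hv (by simpa using hv0)

end MatrixForms

/-- Elimination lemma (Helmersson 1999, Theorem 2; Lemma 3 of the paper). -/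
theorem elimination_lemma {l k m n r : ℕ}
    (P : Matrix (Fin l) (Fin l) ℝ) (hP : P.IsSymm)
    (W : Matrix (Fin l) (Fin k) ℝ) (U : Matrix (Fin l) (Fin m) ℝ)
    (V : Matrix (Fin n) (Fin k) ℝ) (Vperp : Matrix (Fin k) (Fin r) ℝ)
    (hbasis : LinearMap.range Vperp.mulVecLin = LinearMap.ker V.mulVecLin)
    (hinj : Function.Injective Vperp.mulVecLin) :
    (∃ K : Matrix (Fin m) (Fin n) ℝ,
        (-((W + U * K * V)ᵀ * P * (W + U * K * V))).PosDef) ↔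
      (-((W * Vperp)ᵀ * P * (W * Vperp))).PosDef ∧
        HasAtLeastNegEigenvalues ((fromCols W U)ᵀ * P * fromCols W U) k := by
  have hgraph := exists_isNegDefOn_graph_comp_iff (hP.isSymm_blockForm W U) V.mulVecLin
  rw [finrank_fin_fun] at hgraph
  rw [posDef_neg_mul_iff_isNegDefOn_prod_bot (U := U) hP hbasis hinj,
    hasAtLeastNegEigenvalues_fromCols_iff, ← hgraph]
  refine (toLin' : Matrix (Fin m) (Fin n) ℝ ≃ₗ[ℝ] _).toEquiv.exists_congr fun K ↦ ?_
  exact posDef_neg_add_mul_mul_iff hP K V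
end

section
/- (Lifted Lyapunov inequality from clock-based inequalities.) Let k ∈ ℕ, matrices X_0, …, X_k ∈ 𝕊^n all positive definite, and real matrices A, B, C, D, A_J, B_J, C_J, D_J, P of compatible dimensions. Suppose for each l ∈ {0,…,k-1}: [A, B; I, 0]ᵀ diag(X_{l+1}, -X_l) [A, B; I, 0] + [C, D; 0, I]ᵀ P [C, D; 0, I] ≺ 0, and additionally [A_J, B_J; I, 0]ᵀ diag(X_0, -X_k) [A_J, B_J; I, 0] + [C_J, D_J; 0, I]ᵀ P [C_J, D_J; 0, I] ≺ 0. Then with X := X_0, the lifted inequality (outer factor given by the matrices A_J A^k, A_J A^{k-1}B, …, B_J in the first row, identity/zero blocks, and the interleaved output rows C A^{j}, C A^{j-1}B,… D and C_J A^k, …, D_J) holds: the lifted matrix Uᵀ 𝓜 U ≺ 0, where 𝓜 = diag(X, -X, I_{k+1} ⊗ P) and U is the lifted outer factor of Theorem 1 of the paper. Concretely for k = 1: [A_J A, A_J B, B_J; I, 0, 0]ᵀ diag(X_0, -X_0) [...] + [C, D, 0; 0, I, 0]ᵀ P [...] + [C_J A, C_J B, D_J; 0, 0, I]ᵀ P [...]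 ≺ 0. -/
/-!
Pull the two clock LMIs back along `U₀ = [I 0 0; 0 I 0]` and `U₁ = [A B 0; 0 0 I]`, which send the
lifted variable `(x, d₀, d₁)` to the variables `(x, d₀)` of the flow step and `(A x + B d₀, d₁)` of
the jump. In the sum of the pulled-back matrices the storage terms of the intermediate matrix `X₁`
cancel, leaving exactly the lifted matrix. Each pull-back is negative definite off the kernel of
its `Uₗ`, and these kernels meet only in `0`, so the sum is negative definite.
-/

open Matrix

namespace Matrix

variable {ι κ ν R : Type*} [Fintype ι] [Fintype κ]

lemma star_dotProduct_conjTranspose_mul_mul_mulVec [Fintype ν] [Ring R] [StarRing R]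
    (M : Matrix ι ι R) (U : Matrix ι ν R) (v : ν → R) :
    star v ⬝ᵥ (Uᴴ * M * U) *ᵥ v = star (U *ᵥ v) ⬝ᵥ M *ᵥ (U *ᵥ v) := by
  simp only [star_mulVec, dotProduct_mulVec, vecMul_vecMul, Matrix.mul_assoc]

lemma PosDef.conjTranspose_mul_mul_add_conjTranspose_mul_mul [Fintype ν] [Ring R] [PartialOrder R]
    [StarRing R] [IsOrderedAddMonoid R] {F : Matrix ι ι R} {J : Matrix κ κ R}
    (hF : F.PosDef) (hJ : J.PosDef) {S : Matrix ι ν R} {T : Matrix κ ν R}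
    (hST : ∀ v, S *ᵥ v = 0 → T *ᵥ v = 0 → v = 0) :
    (Sᴴ * F * S + Tᴴ * J * T).PosDef := by
  refine of_dotProduct_mulVec_pos ((isHermitian_conjTranspose_mul_mul S hF.1).add
    (isHermitian_conjTranspose_mul_mul T hJ.1)) fun v hv => ?_
  rw [add_mulVec, dotProduct_add, star_dotProduct_conjTranspose_mul_mul_mulVec,
    star_dotProduct_conjTranspose_mul_mul_mulVec]
  have hFv := hF.posSemidef.dotProduct_mulVec_nonneg (S *ᵥ v)
  have hJv := hJ.posSemidef.dotProduct_mulVec_nonneg (T *ᵥ v)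
  by_cases hSv : S *ᵥ v = 0
  · exact add_pos_of_nonneg_of_pos hFv (hJ.dotProduct_mulVec_pos fun hTv => hv (hST v hSv hTv))
  · exact add_pos_of_pos_of_nonneg (hF.dotProduct_mulVec_pos hSv) hJv

lemma transpose_fromRows_mul_fromBlocks_mul_fromRows [Ring R] (S T : Matrix ι ν R)
    (X Y : Matrix ι ι R) :
    (fromRows S T)ᵀ * fromBlocks X 0 0 (-Y) * fromRows S T = Sᵀ * X * S - Tᵀ * Y * T := by
  simp [transpose_fromRows, fromCols_mul_fromBlocks, fromCols_mul_fromRows, sub_eq_add_neg,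
    Matrix.mul_neg, Matrix.neg_mul]

lemma transpose_mul_transpose_mul_mul_mul [CommRing R] (U : Matrix ι ν R) (G : Matrix κ ι R)
    (M : Matrix κ κ R) :
    Uᵀ * (Gᵀ * M * G) * U = (G * U)ᵀ * M * (G * U) := by
  simp only [transpose_mul, Matrix.mul_assoc]

end Matrix

section ClockLMI

variable {m p q R : Type*} [CommRing R]

def flowFactor [DecidableEq m] (A : Matrix m m R) (B : Matrix m p R) :
    Matrix (m ⊕ m) (m ⊕ p) R :=
  fromBlocks A B 1 0

lemma flowFactor_eq_fromRows [DecidableEq m] (A : Matrix m m R) (B : Matrix m p R) :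
    flowFactor A B = fromRows (fromCols A B) (fromCols 1 0) :=
  (fromRows_fromCols_eq_fromBlocks _ _ _ _).symm

variable [DecidableEq p]

def outputFactor (C : Matrix q m R) (D : Matrix q p R) : Matrix (q ⊕ p) (m ⊕ p) R :=
  fromBlocks C D 0 1

/-- The paper's `U₀ = [I, 0, 0; 0, I, 0]`, on the lifted variable `(x, d₀, d₁)`. -/
def liftFactor₀ (R m p : Type*) [CommRing R] [DecidableEq m] [DecidableEq p] :
    Matrix (m ⊕ p) (m ⊕ (p ⊕ p)) R :=
  fromBlocks 1 0 0 (fromCols 1 0)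

/-- The paper's `U₁ = [A, B, 0; 0, 0, I]`. -/
def liftFactor₁ (A : Matrix m m R) (B : Matrix m p R) : Matrix (m ⊕ p) (m ⊕ (p ⊕ p)) R :=
  fromBlocks A (fromCols B 0) 0 (fromCols 0 1)

variable [Fintype m] [Fintype p]

/-- The clock LMI of a step from storage `X` to storage `X'` reads
`clockMatrix A B C D P X' X ≺ 0`. -/
def clockMatrix [Fintype q] [DecidableEq m] (A : Matrix m m R) (B : Matrix m p R)
    (C : Matrix q m R) (D : Matrix q p R) (P : Matrix (q ⊕ p) (q ⊕ p) R) (X' X : Matrix m m R) :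
    Matrix (m ⊕ p) (m ⊕ p) R :=
  (flowFactor A B)ᵀ * fromBlocks X' 0 0 (-X) * flowFactor A B +
    (outputFactor C D)ᵀ * P * outputFactor C D

lemma flowFactor_mul_liftFactor₀ [DecidableEq m] (A : Matrix m m R) (B : Matrix m p R) :
    flowFactor A B * liftFactor₀ R m p = fromRows (fromCols A (fromCols B 0)) (fromCols 1 0) := by
  rw [flowFactor, liftFactor₀, fromBlocks_multiply]
  ext (i | i) (j | j | j) <;> simp

lemma flowFactor_mul_liftFactor₁ [DecidableEq m] (A AJ : Matrix m m R) (B BJ : Matrix m p R) :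
    flowFactor AJ BJ * liftFactor₁ A B =
      fromRows (fromCols (AJ * A) (fromCols (AJ * B) BJ)) (fromCols A (fromCols B 0)) := by
  rw [flowFactor, liftFactor₁, fromBlocks_multiply]
  ext (i | i) (j | j | j) <;> simp [Matrix.mul_apply]

lemma outputFactor_mul_liftFactor₀ [DecidableEq m] (C : Matrix q m R) (D : Matrix q p R) :
    outputFactor C D * liftFactor₀ R m p = fromBlocks C (fromCols D 0) 0 (fromCols 1 0) := by
  rw [outputFactor, liftFactor₀, fromBlocks_multiply]
  ext (i | i) (j | j | j) <;> simp

lemma outputFactor_mul_liftFactor₁ (A : Matrix m m R) (B : Matrix m p R) (CJ : Matrix q m R)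
    (DJ : Matrix q p R) :
    outputFactor CJ DJ * liftFactor₁ A B =
      fromBlocks (CJ * A) (fromCols (CJ * B) DJ) 0 (fromCols 0 1) := by
  rw [outputFactor, liftFactor₁, fromBlocks_multiply]
  ext (i | i) (j | j | j) <;> simp [Matrix.mul_apply]

lemma liftedMatrix_eq_add_clockMatrix [Fintype q] [DecidableEq m] (A AJ : Matrix m m R)
    (B BJ : Matrix m p R) (C CJ : Matrix q m R) (D DJ : Matrix q p R)
    (P : Matrix (q ⊕ p) (q ⊕ p) R) (X₀ X₁ : Matrix m m R) :
    (flowFactor (AJ * A) (fromCols (AJ * B) BJ))ᵀ * fromBlocks X₀ 0 0 (-X₀) *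
        flowFactor (AJ * A) (fromCols (AJ * B) BJ) +
      (outputFactor C D * liftFactor₀ R m p)ᵀ * P * (outputFactor C D * liftFactor₀ R m p) +
      (outputFactor CJ DJ * liftFactor₁ A B)ᵀ * P * (outputFactor CJ DJ * liftFactor₁ A B) =
    (liftFactor₀ R m p)ᵀ * clockMatrix A B C D P X₁ X₀ * liftFactor₀ R m p +
      (liftFactor₁ A B)ᵀ * clockMatrix AJ BJ CJ DJ P X₀ X₁ * liftFactor₁ A B := by
  simp only [clockMatrix, Matrix.mul_add, Matrix.add_mul, transpose_mul_transpose_mul_mul_mul,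
    flowFactor_mul_liftFactor₀, flowFactor_mul_liftFactor₁, flowFactor_eq_fromRows (AJ * A),
    transpose_fromRows_mul_fromBlocks_mul_fromRows]
  abel

lemma eq_zero_of_liftFactor_mulVec_eq_zero [DecidableEq m] (A : Matrix m m R)
    (B : Matrix m p R) {v : m ⊕ (p ⊕ p) → R} (h₀ : liftFactor₀ R m p *ᵥ v = 0)
    (h₁ : liftFactor₁ A B *ᵥ v = 0) : v = 0 := by
  obtain ⟨x, d₀, d₁, rfl⟩ : ∃ x d₀ d₁, v = Sum.elim x (Sum.elim d₀ d₁) :=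
    ⟨_, _, _, by ext (i | i | i) <;> rfl⟩
  simp only [liftFactor₀, liftFactor₁, fromBlocks_mulVec, fromCols_mulVec, Sum.elim_comp_inl,
    Sum.elim_comp_inr, one_mulVec, zero_mulVec, add_zero, zero_add, ← Sum.elim_zero_zero,
    Sum.elim_eq_iff] at h₀ h₁ ⊢
  exact ⟨h₀.1, h₀.2, h₁.2⟩

end ClockLMI

theorem lifted_from_clock_LMIs_k1_general {n nd ne : ℕ}
    (A AJ : Matrix (Fin n) (Fin n) ℝ) (B BJ : Matrix (Fin n) (Fin nd) ℝ)
    (C CJ : Matrix (Fin ne) (Fin n) ℝ) (D DJ : Matrix (Fin ne) (Fin nd) ℝ)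
    (P : Matrix (Fin ne ⊕ Fin nd) (Fin ne ⊕ Fin nd) ℝ)
    (X₀ X₁ : Matrix (Fin n) (Fin n) ℝ)
    (hflow : (-((fromBlocks A B (1 : Matrix (Fin n) (Fin n) ℝ)
          (0 : Matrix (Fin n) (Fin nd) ℝ))ᵀ * fromBlocks X₁ 0 0 (-X₀) *
        fromBlocks A B (1 : Matrix (Fin n) (Fin n) ℝ) (0 : Matrix (Fin n) (Fin nd) ℝ) +
        (fromBlocks C D (0 : Matrix (Fin nd) (Fin n) ℝ)
          (1 : Matrix (Fin nd) (Fin nd) ℝ))ᵀ * P *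
        fromBlocks C D (0 : Matrix (Fin nd) (Fin n) ℝ)
          (1 : Matrix (Fin nd) (Fin nd) ℝ))).PosDef)
    (hjump : (-((fromBlocks AJ BJ (1 : Matrix (Fin n) (Fin n) ℝ)
          (0 : Matrix (Fin n) (Fin nd) ℝ))ᵀ * fromBlocks X₀ 0 0 (-X₁) *
        fromBlocks AJ BJ (1 : Matrix (Fin n) (Fin n) ℝ) (0 : Matrix (Fin n) (Fin nd) ℝ) +
        (fromBlocks CJ DJ (0 : Matrix (Fin nd) (Fin n) ℝ)
          (1 : Matrix (Fin nd) (Fin nd) ℝ))ᵀ * P *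
        fromBlocks CJ DJ (0 : Matrix (Fin nd) (Fin n) ℝ)
          (1 : Matrix (Fin nd) (Fin nd) ℝ))).PosDef) :
    (-((fromBlocks (AJ * A) (fromCols (AJ * B) BJ)
          (1 : Matrix (Fin n) (Fin n) ℝ)
          (0 : Matrix (Fin n) (Fin nd ⊕ Fin nd) ℝ))ᵀ *
        fromBlocks X₀ 0 0 (-X₀) *
        fromBlocks (AJ * A) (fromCols (AJ * B) BJ)
          (1 : Matrix (Fin n) (Fin n) ℝ)
          (0 : Matrix (Fin n) (Fin nd ⊕ Fin nd) ℝ) +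
        (fromBlocks C (fromCols D (0 : Matrix (Fin ne) (Fin nd) ℝ))
          (0 : Matrix (Fin nd) (Fin n) ℝ)
          (fromCols (1 : Matrix (Fin nd) (Fin nd) ℝ)
            (0 : Matrix (Fin nd) (Fin nd) ℝ)))ᵀ * P *
        fromBlocks C (fromCols D (0 : Matrix (Fin ne) (Fin nd) ℝ))
          (0 : Matrix (Fin nd) (Fin n) ℝ)
          (fromCols (1 : Matrix (Fin nd) (Fin nd) ℝ)
            (0 : Matrix (Fin nd) (Fin nd) ℝ)) +
        (fromBlocks (CJ * A) (fromCols (CJ * B) DJ)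
          (0 : Matrix (Fin nd) (Fin n) ℝ)
          (fromCols (0 : Matrix (Fin nd) (Fin nd) ℝ)
            (1 : Matrix (Fin nd) (Fin nd) ℝ)))ᵀ * P *
        fromBlocks (CJ * A) (fromCols (CJ * B) DJ)
          (0 : Matrix (Fin nd) (Fin n) ℝ)
          (fromCols (0 : Matrix (Fin nd) (Fin nd) ℝ)
            (1 : Matrix (Fin nd) (Fin nd) ℝ)))).PosDef := by
  have h := PosDef.conjTranspose_mul_mul_add_conjTranspose_mul_mul
    (F := -clockMatrix A B C D P X₁ X₀) (J := -clockMatrix AJ BJ CJ DJ P X₀ X₁) hflow hjump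
    (S := liftFactor₀ ℝ (Fin n) (Fin nd)) (T := liftFactor₁ A B)
    (fun _ ↦ eq_zero_of_liftFactor_mulVec_eq_zero A B)
  simp only [conjTranspose_eq_transpose_of_trivial, Matrix.mul_neg, Matrix.neg_mul, ← neg_add,
    ← liftedMatrix_eq_add_clockMatrix, outputFactor_mul_liftFactor₀,
    outputFactor_mul_liftFactor₁] at h
  exact h

/-- Lifted Lyapunov inequality from clock-based inequalities, concrete case `k = 1`:
the two clock-based LMIs (one flow step followed by one jump) imply the lifted
one-shot LMI with the common matrix `X = X₀`. -/
theorem lifted_from_clock_LMIs_k1 {n nd ne : ℕ}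
    (A AJ : Matrix (Fin n) (Fin n) ℝ) (B BJ : Matrix (Fin n) (Fin nd) ℝ)
    (C CJ : Matrix (Fin ne) (Fin n) ℝ) (D DJ : Matrix (Fin ne) (Fin nd) ℝ)
    (P : Matrix (Fin ne ⊕ Fin nd) (Fin ne ⊕ Fin nd) ℝ) (hP : P.IsSymm)
    (X₀ X₁ : Matrix (Fin n) (Fin n) ℝ) (hX₀ : X₀.PosDef) (hX₁ : X₁.PosDef)
    (hflow : (-((fromBlocks A B (1 : Matrix (Fin n) (Fin n) ℝ)
          (0 : Matrix (Fin n) (Fin nd) ℝ))ᵀ * fromBlocks X₁ 0 0 (-X₀) *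
        fromBlocks A B (1 : Matrix (Fin n) (Fin n) ℝ) (0 : Matrix (Fin n) (Fin nd) ℝ) +
        (fromBlocks C D (0 : Matrix (Fin nd) (Fin n) ℝ)
          (1 : Matrix (Fin nd) (Fin nd) ℝ))ᵀ * P *
        fromBlocks C D (0 : Matrix (Fin nd) (Fin n) ℝ)
          (1 : Matrix (Fin nd) (Fin nd) ℝ))).PosDef)
    (hjump : (-((fromBlocks AJ BJ (1 : Matrix (Fin n) (Fin n) ℝ)
          (0 : Matrix (Fin n) (Fin nd) ℝ))ᵀ * fromBlocks X₀ 0 0 (-X₁) *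
        fromBlocks AJ BJ (1 : Matrix (Fin n) (Fin n) ℝ) (0 : Matrix (Fin n) (Fin nd) ℝ) +
        (fromBlocks CJ DJ (0 : Matrix (Fin nd) (Fin n) ℝ)
          (1 : Matrix (Fin nd) (Fin nd) ℝ))ᵀ * P *
        fromBlocks CJ DJ (0 : Matrix (Fin nd) (Fin n) ℝ)
          (1 : Matrix (Fin nd) (Fin nd) ℝ))).PosDef) :
    (-((fromBlocks (AJ * A) (fromCols (AJ * B) BJ)
          (1 : Matrix (Fin n) (Fin n) ℝ)
          (0 : Matrix (Fin n) (Fin nd ⊕ Fin nd) ℝ))ᵀ *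
        fromBlocks X₀ 0 0 (-X₀) *
        fromBlocks (AJ * A) (fromCols (AJ * B) BJ)
          (1 : Matrix (Fin n) (Fin n) ℝ)
          (0 : Matrix (Fin n) (Fin nd ⊕ Fin nd) ℝ) +
        (fromBlocks C (fromCols D (0 : Matrix (Fin ne) (Fin nd) ℝ))
          (0 : Matrix (Fin nd) (Fin n) ℝ)
          (fromCols (1 : Matrix (Fin nd) (Fin nd) ℝ)
            (0 : Matrix (Fin nd) (Fin nd) ℝ)))ᵀ * P *
        fromBlocks C (fromCols D (0 : Matrix (Fin ne) (Fin nd) ℝ))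
          (0 : Matrix (Fin nd) (Fin n) ℝ)
          (fromCols (1 : Matrix (Fin nd) (Fin nd) ℝ)
            (0 : Matrix (Fin nd) (Fin nd) ℝ)) +
        (fromBlocks (CJ * A) (fromCols (CJ * B) DJ)
          (0 : Matrix (Fin nd) (Fin n) ℝ)
          (fromCols (0 : Matrix (Fin nd) (Fin nd) ℝ)
            (1 : Matrix (Fin nd) (Fin nd) ℝ)))ᵀ * P *
        fromBlocks (CJ * A) (fromCols (CJ * B) DJ)
          (0 : Matrix (Fin nd) (Fin n) ℝ)
          (fromCols (0 : Matrix (Fin nd) (Fin nd) ℝ)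
            (1 : Matrix (Fin nd) (Fin nd) ℝ)))).PosDef :=
  lifted_from_clock_LMIs_k1_general A AJ B BJ C CJ D DJ P X₀ X₁ hflow hjump
end
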